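/- arXiv:2202.11260 — 4 statements merged into one kernel-verified Lean document; each statement's English description precedes it below -/
import Mathlib

section
/- Let X be a smooth projective surface with K_X pseudo-effective, and let C be an irreducible curve on X with K_X·C < 0. Then C² = K_X·C = -1, and C is a smooth rational curve. -/
noncomputable section

/-- Numerical and linear-system data of a (smooth or normal) projective surface over ℂ:
an abelian group of ℝ-divisor classes with intersection pairing, the canonical class,
and the standard positivity and curve predicates, together with standard facts
(adjunction, duality of the nef and pseudo-effective cones, integrality) as axioms. -/
structure NumSurface where
  Divisor : Type
  [divAddGroup : AddCommGroup Divisor]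
  [divModule : Module ℝ Divisor]
  /-- the intersection pairing -/
  inter : Divisor → Divisor → ℝ
  inter_comm : ∀ D E, inter D E = inter E D
  inter_add_left : ∀ D D' E, inter (D + D') E = inter D E + inter D' E
  inter_smul_left : ∀ (r : ℝ) (D E : Divisor), inter (r • D) E = r * inter D E
  /-- the canonical divisor class -/
  K : Divisor
  /-- `C` is the class of an irreducible (reduced) curve -/
  IsCurve : Divisor → Prop
  /-- `C` is the class of a smooth rational curve (a curve isomorphic to ℙ¹) -/
  IsSmoothRational : Divisor → Prop
  IsEffective : Divisor → Prop
  IsNef : Divisor → Prop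
  IsPsef : Divisor → Prop
  IsBig : Divisor → Prop
  IsAmple : Divisor → Prop
  /-- the surface is rational, i.e. birational to ℙ² -/
  IsRational : Prop
  /-- `D` is an integral (Weil) divisor -/
  IsIntegral : Divisor → Prop
  /-- the linear system `|D|` is nonempty -/
  LinSysNonempty : Divisor → Prop
  /-- the linear system `|D|` defines a birational map -/
  DefinesBirational : Divisor → Prop
  /-- the linear system `|D|` has no fixed part -/
  HasNoFixedPart : Divisor → Prop
  smoothRational_isCurve : ∀ C, IsSmoothRational C → IsCurve C
  /-- adjunction for a smooth rational curve -/
  adjunction_smoothRational : ∀ C, IsSmoothRational C → inter (K + C) C = -2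
  /-- adjunction: `(K+C)·C = 2pₐ(C) - 2 ≥ -2` for an irreducible curve -/
  curve_adjunction_ge : ∀ C, IsCurve C → -2 ≤ inter (K + C) C
  smoothRational_of_adjunction : ∀ C, IsCurve C → inter (K + C) C = -2 → IsSmoothRational C
  inter_curve_ne_nonneg : ∀ C D, IsCurve C → IsCurve D → C ≠ D → 0 ≤ inter C D
  /-- on a smooth surface, intersection numbers of curves are integers -/
  inter_curve_int : ∀ C D, IsCurve C → IsCurve D → ∃ n : ℤ, inter C D = n
  inter_K_int : ∀ C, IsCurve C → ∃ n : ℤ, inter K C = n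
  nef_iff : ∀ D, IsNef D ↔ ∀ C, IsCurve C → 0 ≤ inter D C
  /-- on a surface the pseudo-effective cone is dual to the nef cone -/
  psef_iff : ∀ D, IsPsef D ↔ ∀ N, IsNef N → 0 ≤ inter D N
  effective_isPsef : ∀ D, IsEffective D → IsPsef D
  curve_isEffective : ∀ C, IsCurve C → IsEffective C
  effective_add : ∀ D D', IsEffective D → IsEffective D' → IsEffective (D + D')

attribute [instance] NumSurface.divAddGroup NumSurface.divModule

/-- Let `X` be a smooth projective surface with `K_X` pseudo-effective and `C` an
irreducible curve with `K_X·C < 0`. Then `C² = K_X·C = -1` and `C` is a smooth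
rational curve. -/
theorem stmt_1 (X : NumSurface) (C : X.Divisor)
    (hK : X.IsPsef X.K) (hC : X.IsCurve C) (h : X.inter X.K C < 0) :
    X.inter C C = -1 ∧ X.inter X.K C = -1 ∧ X.IsSmoothRational C := by
  -- C² < 0, else C is nef and K·C ≥ 0
  have hCC : X.inter C C < 0 := by
    by_contra hpos
    push_neg at hpos
    have hnef : X.IsNef C := by
      rw [X.nef_iff]
      intro D hD
      by_cases hEq : C = D
      · subst hEq; exact hpos
      · exact X.inter_curve_ne_nonneg C D hC hD hEq
    have := (X.psef_iff X.K).mp hK C hnef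
    linarith
  obtain ⟨n, hn⟩ := X.inter_K_int C hC
  obtain ⟨m, hm⟩ := X.inter_curve_int C C hC hC
  have hadj := X.curve_adjunction_ge C hC
  rw [X.inter_add_left] at hadj
  have hn1 : (n : ℝ) ≤ -1 := by
    have : n < 0 := by exact_mod_cast hn ▸ h
    have h2 : n ≤ -1 := by omega
    exact_mod_cast h2
  have hm1 : (m : ℝ) ≤ -1 := by
    have : m < 0 := by exact_mod_cast hm ▸ hCC
    have h2 : m ≤ -1 := by omega
    exact_mod_cast h2
  have hKC : X.inter X.K C = -1 := by rw [hn]; rw [hn, hm] at hadj; linarith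
  have hCC1 : X.inter C C = -1 := by rw [hm]; rw [hn, hm] at hadj; linarith
  refine ⟨hCC1, hKC, X.smoothRational_of_adjunction C hC ?_⟩
  rw [X.inter_add_left, hKC, hCC1]; norm_num
end
end

section
/- Let X be a smooth projective surface with K_X pseudo-effective, and let E₁, E₂ be two distinct smooth rational curves on X with E₁² = E₂² = -1. Then E₁·E₂ = 0. -/
noncomputable section

/-- Let `X` be a smooth projective surface with `K_X` pseudo-effective, and `E₁, E₂` two
distinct smooth rational curves on `X` with `E₁² = E₂² = -1`. Then `E₁·E₂ = 0`. -/
theorem stmt_4 (X : NumSurface) (E₁ E₂ : X.Divisor)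
    (hK : X.IsPsef X.K)
    (h1 : X.IsSmoothRational E₁) (h2 : X.IsSmoothRational E₂) (hne : E₁ ≠ E₂)
    (hs1 : X.inter E₁ E₁ = -1) (hs2 : X.inter E₂ E₂ = -1) :
    X.inter E₁ E₂ = 0 := by
  have hc1 := X.smoothRational_isCurve E₁ h1
  have hc2 := X.smoothRational_isCurve E₂ h2
  -- K·Eᵢ = -1 from adjunction
  have hK1 : X.inter X.K E₁ = -1 := by
    have := X.adjunction_smoothRational E₁ h1
    rw [X.inter_add_left, hs1] at this; linarith
  have hK2 : X.inter X.K E₂ = -1 := by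
    have := X.adjunction_smoothRational E₂ h2
    rw [X.inter_add_left, hs2] at this; linarith
  set n : ℝ := X.inter E₁ E₂ with hn
  have hn0 : 0 ≤ n := X.inter_curve_ne_nonneg E₁ E₂ hc1 hc2 hne
  by_contra hne0
  -- n is a positive integer, hence n ≥ 1
  obtain ⟨m, hm⟩ := X.inter_curve_int E₁ E₂ hc1 hc2
  have hm1 : (1 : ℤ) ≤ m := by
    by_contra h
    push_neg at h
    have : (m : ℝ) ≤ 0 := by exact_mod_cast Int.lt_add_one_iff.mp (by omega)
    have : n ≤ 0 := by rw [hn, hm]; exact this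
    exact hne0 (le_antisymm this hn0)
  have hn1 : 1 ≤ n := by rw [hn, hm]; exact_mod_cast hm1
  -- N := E₁ + n•E₂ is nef
  have hNnef : X.IsNef (E₁ + n • E₂) := by
    rw [X.nef_iff]
    intro C hC
    rw [X.inter_add_left, X.inter_smul_left]
    by_cases hC1 : C = E₁
    · rw [hC1, hs1, X.inter_comm E₂ E₁, ← hn]
      nlinarith
    · by_cases hC2 : C = E₂
      · rw [hC2, hs2, ← hn]; ring_nf; exact le_refl 0
      · have g1 := X.inter_curve_ne_nonneg E₁ C hc1 hC (Ne.symm hC1)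
        have g2 := X.inter_curve_ne_nonneg E₂ C hc2 hC (Ne.symm hC2)
        positivity
  -- K psef pairs nonnegatively with N, contradiction
  have := (X.psef_iff X.K).mp hK _ hNnef
  rw [X.inter_comm, X.inter_add_left, X.inter_smul_left,
    X.inter_comm E₁ X.K, X.inter_comm E₂ X.K, hK1, hK2] at this
  linarith
end
end

section
/- Let X be a smooth projective surface with K_X pseudo-effective, and let E₁, E₂, E₃ be three distinct smooth rational curves on X with E₁² = E₃² = -2 and E₂² = -1. Then E₁·E₂ = 0 or E₂·E₃ = 0. -/
noncomputable section

/-- Let `X` be a smooth projective surface with `K_X` pseudo-effective, and `E₁, E₂, E₃`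
three distinct smooth rational curves on `X` with `E₁² = E₃² = -2` and `E₂² = -1`. Then
`E₁·E₂ = 0` or `E₂·E₃ = 0`. -/
theorem stmt_5 (X : NumSurface) (E₁ E₂ E₃ : X.Divisor)
    (hK : X.IsPsef X.K)
    (h1 : X.IsSmoothRational E₁) (h2 : X.IsSmoothRational E₂) (h3 : X.IsSmoothRational E₃)
    (h12 : E₁ ≠ E₂) (h13 : E₁ ≠ E₃) (h23 : E₂ ≠ E₃)
    (hs1 : X.inter E₁ E₁ = -2) (hs3 : X.inter E₃ E₃ = -2) (hs2 : X.inter E₂ E₂ = -1) :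
    X.inter E₁ E₂ = 0 ∨ X.inter E₂ E₃ = 0 := by
  by_contra hcon
  push_neg at hcon
  obtain ⟨ha0, hb0⟩ := hcon
  have hc1 := X.smoothRational_isCurve E₁ h1
  have hc2 := X.smoothRational_isCurve E₂ h2
  have hc3 := X.smoothRational_isCurve E₃ h3
  -- intersection numbers
  have hanneg : 0 ≤ X.inter E₁ E₂ := X.inter_curve_ne_nonneg E₁ E₂ hc1 hc2 h12
  have hbnneg : 0 ≤ X.inter E₂ E₃ := X.inter_curve_ne_nonneg E₂ E₃ hc2 hc3 h23
  have hcnneg : 0 ≤ X.inter E₁ E₃ := X.inter_curve_ne_nonneg E₁ E₃ hc1 hc3 h13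
  obtain ⟨m, hm⟩ := X.inter_curve_int E₁ E₂ hc1 hc2
  obtain ⟨n, hn⟩ := X.inter_curve_int E₂ E₃ hc2 hc3
  have ha1 : 1 ≤ X.inter E₁ E₂ := by
    rw [hm] at hanneg ha0 ⊢
    have : (0:ℤ) < m := by exact_mod_cast lt_of_le_of_ne hanneg (fun h => ha0 h.symm)
    exact_mod_cast this
  have hb1 : 1 ≤ X.inter E₂ E₃ := by
    rw [hn] at hbnneg hb0 ⊢
    have : (0:ℤ) < n := by exact_mod_cast lt_of_le_of_ne hbnneg (fun h => hb0 h.symm)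
    exact_mod_cast this
  -- K intersections from adjunction
  have hK1 : X.inter X.K E₁ = 0 := by
    have := X.adjunction_smoothRational E₁ h1
    rw [X.inter_add_left, hs1] at this; linarith
  have hK3 : X.inter X.K E₃ = 0 := by
    have := X.adjunction_smoothRational E₃ h3
    rw [X.inter_add_left, hs3] at this; linarith
  have hK2 : X.inter X.K E₂ = -1 := by
    have := X.adjunction_smoothRational E₂ h2
    rw [X.inter_add_left, hs2] at this; linarith
  set D : X.Divisor := E₁ + (2:ℝ) • E₂ + E₃ with hD
  have expand : ∀ C, X.inter D C = X.inter E₁ C + 2 * X.inter E₂ C + X.inter E₃ C := by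
    intro C
    rw [hD, X.inter_add_left, X.inter_add_left, X.inter_smul_left]
  have hnef : X.IsNef D := by
    rw [X.nef_iff]
    intro C hC
    rw [expand]
    by_cases hC1 : C = E₁
    · subst hC1
      have e2 : X.inter E₂ C = X.inter C E₂ := X.inter_comm _ _
      have e3 : X.inter E₃ C = X.inter C E₃ := X.inter_comm _ _
      rw [e2, e3]
      linarith
    by_cases hC2 : C = E₂
    · subst hC2
      have e1 : X.inter E₁ C = X.inter E₁ C := rfl
      have e3 : X.inter E₃ C = X.inter C E₃ := X.inter_comm _ _
      rw [e3]
      linarith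
    by_cases hC3 : C = E₃
    · subst hC3
      linarith
    · have n1 : 0 ≤ X.inter E₁ C := X.inter_curve_ne_nonneg E₁ C hc1 hC (Ne.symm hC1)
      have n2 : 0 ≤ X.inter E₂ C := X.inter_curve_ne_nonneg E₂ C hc2 hC (Ne.symm hC2)
      have n3 : 0 ≤ X.inter E₃ C := X.inter_curve_ne_nonneg E₃ C hc3 hC (Ne.symm hC3)
      linarith
  have hKD : 0 ≤ X.inter X.K D := (X.psef_iff X.K).mp hK D hnef
  rw [X.inter_comm, expand, X.inter_comm E₁, X.inter_comm E₂, X.inter_comm E₃,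
    hK1, hK2, hK3] at hKD
  linarith
end
end

section
/- For integers m ≥ 1, n ≥ 4, k ≥ m, set a_i = i/(2k(n-1)+1) for 1 ≤ i ≤ k(n-1) and a_i = (i-1)/(2k(n-1)-1) for k(n-1)+1 ≤ i ≤ 2k(n-2). Let C be a curve with C·E_i = 0 for all i except C·E_{k(n-1)} = C·E_{k(n-1)+1} = 1, and K·C = -1, where the E_i form a chain with E_i² = -2 (i < 2k(n-2)), E_{2k(n-2)}² = -n, E_i·E_j ≠ 0 iff |i-j| = 1. Then (K + Σ a_i E_i)·C = 1/(4k²(n-1)²-1), and for any integers c₁,…,c_{2k(n-2)} with 0 ≤ c_i ≤ ⌊m a_i⌋, one has (K + Σ(c_i/m)E_i)·C < 0 whenever m is even. -/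
noncomputable section

/-- The coefficients of Example-Theorem 5.2: `a i = i/(2k(n-1)+1)` for `1 ≤ i ≤ k(n-1)`
and `a i = (i-1)/(2k(n-1)-1)` for `k(n-1)+1 ≤ i ≤ 2k(n-2)`. -/
def coeffA (n k i : ℕ) : ℝ :=
  if i ≤ k * (n - 1) then (i : ℝ) / (2 * k * (n - 1) + 1)
  else ((i : ℝ) - 1) / (2 * k * (n - 1) - 1)


private lemma NumSurface.inter_zero_left' (Y : NumSurface) (C : Y.Divisor) :
    Y.inter 0 C = 0 := by
  have h := Y.inter_add_left 0 0 C
  rw [add_zero] at h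
  linarith

private lemma NumSurface.inter_sum_left' (Y : NumSurface) {ι : Type*} (s : Finset ι)
    (D : ι → Y.Divisor) (C : Y.Divisor) :
    Y.inter (∑ i ∈ s, D i) C = ∑ i ∈ s, Y.inter (D i) C := by
  classical
  induction s using Finset.induction_on with
  | empty => simpa using Y.inter_zero_left' C
  | insert _ _ h ih => rw [Finset.sum_insert h, Y.inter_add_left, ih, Finset.sum_insert h]

set_option maxHeartbeats 1000000 in
/-- For integers `m ≥ 1`, `n ≥ 4`, `k ≥ m`, let `E₁, …, E_{2k(n-2)}` be a chain of curves
on a smooth projective surface with `Eᵢ² = -2` for `i < 2k(n-2)`, `E_{2k(n-2)}² = -n`,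
consecutive members meeting once, and let `C` be a curve with `K·C = -1` meeting only
`E_{k(n-1)}` and `E_{k(n-1)+1}`, each once. Then with the coefficients `a i = coeffA n k i`
one has `(K + Σ aᵢEᵢ)·C = 1/(4k²(n-1)² - 1)`, and for any integers `0 ≤ cᵢ ≤ ⌊m aᵢ⌋`,
`(K + Σ (cᵢ/m)Eᵢ)·C < 0` whenever `m` is even. (Curves are indexed by `i : Fin (2k(n-2))`
representing `E_{i+1}`.) -/
theorem stmt_16 (Y : NumSurface) (m n k : ℕ) (hm : 1 ≤ m) (hn : 4 ≤ n) (hk : m ≤ k)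
    (E : Fin (2 * k * (n - 2)) → Y.Divisor) (C : Y.Divisor)
    (hEcurve : ∀ i, Y.IsCurve (E i)) (hCcurve : Y.IsCurve C)
    (hself2 : ∀ i : Fin (2 * k * (n - 2)), i.val + 1 < 2 * k * (n - 2) →
      Y.inter (E i) (E i) = -2)
    (hselfn : ∀ i : Fin (2 * k * (n - 2)), i.val + 1 = 2 * k * (n - 2) →
      Y.inter (E i) (E i) = -(n : ℝ))
    (hlink : ∀ i j : Fin (2 * k * (n - 2)), i ≠ j →
      Y.inter (E i) (E j) =
        if (i.val : ℤ) - j.val = 1 ∨ (j.val : ℤ) - i.val = 1 then 1 else 0)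
    (hKC : Y.inter Y.K C = -1)
    (hCE : ∀ i : Fin (2 * k * (n - 2)), Y.inter C (E i) =
      if i.val + 1 = k * (n - 1) ∨ i.val + 1 = k * (n - 1) + 1 then 1 else 0) :
    Y.inter (Y.K + ∑ i, coeffA n k (i.val + 1) • E i) C
        = 1 / (4 * k ^ 2 * (n - 1) ^ 2 - 1) ∧
    ∀ c : Fin (2 * k * (n - 2)) → ℤ,
      (∀ i, 0 ≤ c i ∧ (c i : ℝ) ≤ ⌊(m : ℝ) * coeffA n k (i.val + 1)⌋) →
      Even m → Y.inter (Y.K + ∑ i, ((c i : ℝ) / m) • E i) C < 0 := by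
  classical
  have hn1 : 1 ≤ n := by omega
  have hk1 : 1 ≤ k := le_trans hm hk
  have hN3 : 3 ≤ k * (n - 1) := by
    have h3 : 1 * 3 ≤ k * (n - 1) := Nat.mul_le_mul hk1 (by omega)
    omega
  have hNM : k * (n - 1) + 1 ≤ 2 * k * (n - 2) := by
    have h1 : k * (n - 1) + k * 1 ≤ k * (2 * (n - 2)) := by
      rw [← Nat.mul_add]
      exact Nat.mul_le_mul_left k (by omega)
    have h2 : k * (2 * (n - 2)) = 2 * k * (n - 2) := by ring
    omega
  set p : Fin (2 * k * (n - 2)) := ⟨k * (n - 1) - 1, by omega⟩ with hp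
  set q : Fin (2 * k * (n - 2)) := ⟨k * (n - 1), by omega⟩ with hq
  have hpq : p ≠ q := by
    simp only [hp, hq, Ne, Fin.mk.injEq]
    omega
  have key : ∀ f : Fin (2 * k * (n - 2)) → ℝ,
      Y.inter (Y.K + ∑ i, f i • E i) C = -1 + (f p + f q) := by
    intro f
    rw [Y.inter_add_left, hKC, Y.inter_sum_left']
    have hterm : ∀ i : Fin (2 * k * (n - 2)),
        Y.inter (f i • E i) C
          = if i.val + 1 = k * (n - 1) ∨ i.val + 1 = k * (n - 1) + 1 then f i else 0 := by
      intro i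
      rw [Y.inter_smul_left, Y.inter_comm, hCE i]
      by_cases h : i.val + 1 = k * (n - 1) ∨ i.val + 1 = k * (n - 1) + 1 <;> simp [h]
    simp only [hterm]
    rw [Finset.sum_eq_add p q hpq]
    · rw [if_pos (Or.inl (show p.val + 1 = k * (n - 1) by simp [hp]; omega)),
        if_pos (Or.inr (show q.val + 1 = k * (n - 1) + 1 by simp [hq]))]
    · intro i _ ⟨hip, hiq⟩
      rw [if_neg]
      rintro (h1 | h2)
      · exact hip (Fin.ext (by simp [hp]; omega))
      · exact hiq (Fin.ext (by simp [hq]; omega))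
    · exact fun h => absurd (Finset.mem_univ p) h
    · exact fun h => absurd (Finset.mem_univ q) h
  set Nr : ℝ := (k : ℝ) * ((n : ℝ) - 1) with hNr
  have hNc : ((k * (n - 1) : ℕ) : ℝ) = Nr := by
    push_cast [Nat.cast_sub hn1]
    ring
  have hnR : (4 : ℝ) ≤ (n : ℝ) := by exact_mod_cast hn
  have hkR : (1 : ℝ) ≤ (k : ℝ) := by exact_mod_cast hk1
  have hNr3 : (3 : ℝ) ≤ Nr := by
    rw [← hNc]
    exact_mod_cast hN3
  have hcp : coeffA n k (p.val + 1) = Nr / (2 * Nr + 1) := by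
    have hv : p.val + 1 = k * (n - 1) := by simp [hp]; omega
    rw [hv, coeffA, if_pos le_rfl, hNc]
    rw [hNr]; ring_nf
  have hcq : coeffA n k (q.val + 1) = Nr / (2 * Nr - 1) := by
    have hv : q.val + 1 = k * (n - 1) + 1 := by simp [hq]
    rw [hv, coeffA, if_neg (by omega)]
    push_cast [hNc]
    rw [hNr]; ring_nf
  constructor
  · rw [key, hcp, hcq]
    have h4 : (4 * (k:ℝ)^2 * ((n:ℝ) - 1)^2 - 1) = (2 * Nr + 1) * (2 * Nr - 1) := by
      rw [hNr]; ring
    rw [h4]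
    have h1 : (2 * Nr + 1) ≠ 0 := by nlinarith
    have h2 : (2 * Nr - 1) ≠ 0 := by nlinarith
    rw [div_add_div _ _ h1 h2, eq_div_iff (mul_ne_zero h1 h2), add_mul,
      div_mul_cancel₀ _ (mul_ne_zero h1 h2)]
    ring
  · rintro c hc ⟨l, hl⟩
    have hl1 : 1 ≤ l := by omega
    have hlk : l ≤ k := by omega
    have hm0 : (0 : ℝ) < (m : ℝ) := by positivity
    have hlR : (l : ℝ) ≤ (k : ℝ) := by exact_mod_cast hlk
    have hl1R : (1 : ℝ) ≤ (l : ℝ) := by exact_mod_cast hl1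
    have h3k : (3 : ℝ) * (k : ℝ) ≤ Nr := by rw [hNr]; nlinarith
    have hbp : c p ≤ (l : ℤ) - 1 := by
      have h1 := (hc p).2
      rw [hcp] at h1
      have hx : (m : ℝ) * (Nr / (2 * Nr + 1)) < ((l : ℤ) : ℝ) := by
        rw [mul_div_assoc', div_lt_iff₀ (by linarith)]
        push_cast [hl]
        nlinarith [hl1R, hNr3]
      have h2 : (c p : ℝ) < ((l : ℤ) : ℝ) :=
        lt_of_le_of_lt h1 (lt_of_le_of_lt (Int.floor_le _) hx)
      have h3 : c p < (l : ℤ) := by exact_mod_cast h2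
      omega
    have hbq : c q ≤ (l : ℤ) := by
      have h1 := (hc q).2
      rw [hcq] at h1
      have hx : (m : ℝ) * (Nr / (2 * Nr - 1)) < ((l : ℤ) : ℝ) + 1 := by
        rw [mul_div_assoc', div_lt_iff₀ (by linarith)]
        push_cast [hl]
        nlinarith [h3k, hlR, hkR, hl1R, hNr3]
      have h2 : (c q : ℝ) < ((l : ℤ) : ℝ) + 1 :=
        lt_of_le_of_lt h1 (lt_of_le_of_lt (Int.floor_le _) hx)
      have h3 : c q < (l : ℤ) + 1 := by
        have h4 : (c q : ℝ) < (((l : ℤ) + 1 : ℤ) : ℝ) := by push_cast at h2 ⊢; linarith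
        exact_mod_cast h4
      omega
    have hint : c p + c q ≤ (m : ℤ) - 1 := by omega
    have hR : (c p : ℝ) + (c q : ℝ) < (m : ℝ) := by
      have h4 : ((c p + c q : ℤ) : ℝ) ≤ ((m : ℤ) : ℝ) - 1 := by exact_mod_cast hint
      push_cast at h4
      linarith
    rw [key]
    have h5 : ((c p : ℝ) / m + (c q : ℝ) / m) < 1 := by
      rw [← add_div, div_lt_one hm0]
      exact hR
    linarith
end
end
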